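/- Let M be a matroid and let S, T be disjoint subsets of E(M). For each e ∈ E(M) − (S ∪ T), at least one of the following holds: (1) κ_{M\e}(S,T) = κ_M(S,T), or (2) κ_{M/e}(S,T) = κ_M(S,T). -/

import Mathlib

open Set Matroid

namespace Intertwine

variable {α : Type*}

/-- The (extended) rank of a set in a matroid: the supremum of the cardinalities of its
independent subsets. -/
noncomputable def eRk (M : Matroid α) (X : Set α) : ℕ∞ :=
  ⨆ I ∈ {I : Set α | M.Indep I ∧ I ⊆ X}, I.encard

/-- The connectivity function `λ_M(X) = r(X) + r(E \ X) - r(M)`. -/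
noncomputable def lam (M : Matroid α) (X : Set α) : ℕ∞ :=
  eRk M X + eRk M (M.E \ X) - eRk M M.E

/-- The connectivity between `S` and `T`:
`κ_M(S,T) = min {λ_M(X) : S ⊆ X ⊆ E \ T}`. -/
noncomputable def kap (M : Matroid α) (S T : Set α) : ℕ∞ :=
  ⨅ X ∈ {X : Set α | S ⊆ X ∧ X ⊆ M.E \ T}, lam M X

/-- Deletion of a set of elements. -/
def del (M : Matroid α) (D : Set α) : Matroid α := M ↾ (M.E \ D)

/-- Contraction of a set of elements, via duality: `M / C = (M* \ C)*`. -/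
def con (M : Matroid α) (C : Set α) : Matroid α := (del M✶ C)✶

/-- `N` is a minor of `M` if `N = M / C \ D` for disjoint subsets `C, D` of `E(M)`. -/
def IsMinor (N M : Matroid α) : Prop :=
  ∃ C D : Set α, C ⊆ M.E ∧ D ⊆ M.E ∧ Disjoint C D ∧ N = del (con M C) D

/-- `M` is representable over the field `𝔽` if its independent sets are exactly the
sets on which some vector-valued function is linearly independent. -/
def IsRepresentable (𝔽 : Type*) [Field 𝔽] (M : Matroid α) : Prop :=
  ∃ (B : Set α) (v : α → (B →₀ 𝔽)),
    ∀ I : Set α, M.Indep I ↔ I ⊆ M.E ∧ LinearIndependent 𝔽 (fun x : I ↦ v x)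

end Intertwine

/-! Deleting or contracting `e` never increases `κ(S, T)`, because `λ` does not increase under
taking minors. If both operations decreased `κ_M(S, T) = k`, there would be sets `X` and `Y`
separating `S` from `T` in `M ＼ e` and `M ／ e` with `λ_{M＼e}(X) < k` and `λ_{M／e}(Y) < k`.
Submodularity of the rank gives
`λ_M(X ∩ Y) + λ_M(X ∪ Y ∪ e) ≤ λ_{M＼e}(X) + λ_{M／e}(Y) + 1 ≤ 2k - 1`,
yet `X ∩ Y` and `X ∪ Y ∪ e` both separate `S` from `T` in `M`, so the left side is at least `2k`.
In infinite rank the truncated subtraction in `λ` makes `κ` vanish for `M` and for `M ＼ e`. -/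

theorem ENat.add_add_one_lt_add_self {a b k : ℕ∞} (ha : a < k) (hb : b < k) :
    a + b + 1 < k + k := by
  refine (ENat.add_one_le_iff (by simp [ha.ne_top, hb.ne_top])).1 ?_
  calc a + b + 1 + 1 = (a + 1) + (b + 1) := by ring
    _ ≤ k + k := add_le_add (Order.add_one_le_of_lt ha) (Order.add_one_le_of_lt hb)

namespace Matroid

variable {α : Type*}

lemma eRk_contract_add_eRk (M : Matroid α) (C X : Set α) :
    (M ／ C).eRk X + M.eRk C = M.eRk (X ∪ C) := by
  obtain ⟨I, hI⟩ := M.exists_isBasis' C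
  obtain ⟨J, hJ, hIJ⟩ := hI.indep.subset_isBasis'_of_subset (hI.subset.trans subset_union_right)
  have hJC : J ∩ C = I :=
    (hI.eq_of_subset_indep (hJ.indep.inter_right C) (subset_inter hIJ hI.subset)
      inter_subset_right).symm
  have hbasis : (M ／ C).IsBasis' (J \ C) ((X ∪ C) \ C) :=
    hJ.contract_isBasis' hI (hJ.indep.subset (union_subset sdiff_subset hIJ))
  have hX : (M ／ C).eRk X = (M ／ C).eRk ((X ∪ C) \ C) := by
    rw [← eRk_inter_ground, ← eRk_inter_ground _ ((X ∪ C) \ C), contract_ground]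
    congr 1
    tauto_set
  rw [hX, hbasis.eRk_eq_encard, hI.eRk_eq_encard, hJ.eRk_eq_encard, ← hJC,
    encard_sdiff_add_encard_inter]

lemma eRk_delete (M : Matroid α) (D X : Set α) : (M ＼ D).eRk X = M.eRk (X \ D) := by
  rw [delete, restrict_eRk_eq', ← eRk_inter_ground M (X \ D)]
  congr 1
  tauto_set

end Matroid

namespace Intertwine

variable {α : Type*} {M : Matroid α} {S T X Y D : Set α} {e : α}

lemma del_eq_delete (M : Matroid α) (D : Set α) : del M D = M ＼ D := rfl

lemma con_eq_contract (M : Matroid α) (C : Set α) : con M C = M ／ C := rfl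

lemma eRk_eq_eRk (M : Matroid α) (X : Set α) : eRk M X = M.eRk X := by
  refine le_antisymm (iSup₂_le fun I hI ↦ hI.1.encard_le_eRk_of_subset hI.2) ?_
  obtain ⟨I, hI⟩ := M.exists_isBasis' X
  rw [← hI.encard_eq_eRk]
  exact le_iSup₂ (f := fun I (_ : I ∈ {I | M.Indep I ∧ I ⊆ X}) ↦ I.encard) I ⟨hI.indep, hI.subset⟩

lemma lam_add_eRank (M : Matroid α) (X : Set α) :
    lam M X + M.eRank = M.eRk X + M.eRk (M.E \ X) := by
  rw [lam, eRk_eq_eRk, eRk_eq_eRk, eRk_eq_eRk, eRk_ground]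
  refine tsub_add_cancel_of_le ?_
  simpa [union_sdiff_self, eRk_union_ground] using M.eRk_union_le_eRk_add_eRk X (M.E \ X)

lemma lam_eq_zero_of_eRank_eq_top (h : M.eRank = ⊤) (X : Set α) : lam M X = 0 := by
  rw [lam, eRk_eq_eRk M M.E, eRk_ground, h]
  exact tsub_eq_zero_of_le le_top

lemma lam_delete_add_eRk (M : Matroid α) (D X : Set α) :
    lam (M ＼ D) X + M.eRk (M.E \ D) = M.eRk (X \ D) + M.eRk (M.E \ (X ∪ D)) := by
  rw [← eRk_delete, eRk_eq_eRank sdiff_subset, lam_add_eRank, eRk_delete, eRk_delete,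
    delete_ground]
  congr 2
  tauto_set

lemma lam_contract_add_eRk (M : Matroid α) (C Y : Set α) :
    lam (M ／ C) Y + (M.eRank + M.eRk C) = M.eRk (Y ∪ C) + M.eRk ((M.E \ Y) ∪ C) := by
  have hC : (M ／ C).eRank + M.eRk C = M.eRank := by
    rw [← eRk_ground, eRk_contract_add_eRk, contract_ground, sdiff_union_self, eRk_ground_union]
  calc lam (M ／ C) Y + (M.eRank + M.eRk C)
      = (lam (M ／ C) Y + (M ／ C).eRank) + (M.eRk C + M.eRk C) := by rw [← hC]; ring
    _ = M.eRk (Y ∪ C) + M.eRk ((M.E \ Y) ∪ C) := by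
      rw [lam_add_eRank, add_add_add_comm, eRk_contract_add_eRk, eRk_contract_add_eRk,
        contract_ground]
      congr 2
      tauto_set

lemma lam_delete_le [M.RankFinite] (hX : X ⊆ M.E) : lam (M ＼ D) (X \ D) ≤ lam M X := by
  have hfin (A : Set α) : M.eRk A ≠ ⊤ := eRk_ne_top_iff.2 (M.isRkFinite_set A)
  have h1 := M.eRk_submod X (M.E \ D)
  have h2 := M.eRk_submod (X ∪ (M.E \ D)) (M.E \ X)
  rw [show X ∩ (M.E \ D) = X \ D by tauto_set] at h1
  rw [show (X ∪ (M.E \ D)) ∩ (M.E \ X) = M.E \ (X ∪ D) by tauto_set,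
    show X ∪ (M.E \ D) ∪ (M.E \ X) = M.E by tauto_set, eRk_ground] at h2
  have key : M.eRk (X \ D) + M.eRk (M.E \ (X ∪ D)) + M.eRank ≤
      M.eRk X + M.eRk (M.E \ X) + M.eRk (M.E \ D) := by
    rw [← ENat.add_le_add_iff_right (hfin (X ∪ (M.E \ D)))]
    calc _ = (M.eRk (X \ D) + M.eRk (X ∪ (M.E \ D))) +
          (M.eRk (M.E \ (X ∪ D)) + M.eRank) := by ring
      _ ≤ (M.eRk X + M.eRk (M.E \ D)) + (M.eRk (X ∪ (M.E \ D)) + M.eRk (M.E \ X)) :=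
          add_le_add h1 h2
      _ = _ := by ring
  refine (ENat.add_le_add_iff_right (WithTop.add_ne_top.2 ⟨hfin (M.E \ D), hfin M.E⟩)).1 ?_
  calc lam (M ＼ D) (X \ D) + (M.eRk (M.E \ D) + M.eRk M.E)
      = M.eRk (X \ D) + M.eRk (M.E \ (X ∪ D)) + M.eRank := by
        rw [← add_assoc, lam_delete_add_eRk, sdiff_union_self, sdiff_idem, eRk_ground]
    _ ≤ M.eRk X + M.eRk (M.E \ X) + M.eRk (M.E \ D) := key
    _ = lam M X + (M.eRk (M.E \ D) + M.eRk M.E) := by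
        rw [add_comm (M.eRk (M.E \ D)), ← add_assoc, eRk_ground, lam_add_eRank]

lemma lam_contract_le [M.RankFinite] : lam (M ／ {e}) (X \ {e}) ≤ lam M X := by
  have hfin (A : Set α) : M.eRk A ≠ ⊤ := eRk_ne_top_iff.2 (M.isRkFinite_set A)
  have hins (A : Set α) : M.eRk (insert e A) ≤ M.eRk A + M.eRk {e} := by
    rw [insert_eq, add_comm]; exact M.eRk_union_le_eRk_add_eRk {e} A
  have key : M.eRk (insert e X) + M.eRk (insert e (M.E \ X)) ≤
      M.eRk X + M.eRk (M.E \ X) + M.eRk {e} := by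
    by_cases heX : e ∈ X
    · rw [insert_eq_of_mem heX, add_assoc]
      exact add_le_add_right (hins _) _
    · have hc : M.eRk (insert e (M.E \ X)) = M.eRk (M.E \ X) := by
        by_cases he : e ∈ M.E
        · rw [insert_eq_of_mem (show e ∈ M.E \ X from ⟨he, heX⟩)]
        · exact eRk_insert_of_notMem_ground _ he
      rw [hc, add_right_comm]
      exact add_le_add_left (hins _) _
  refine (ENat.add_le_add_iff_right (WithTop.add_ne_top.2 ⟨hfin M.E, hfin {e}⟩)).1 ?_
  calc lam (M ／ {e}) (X \ {e}) + (M.eRk M.E + M.eRk {e})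
      = M.eRk (insert e X) + M.eRk (insert e (M.E \ X)) := by
        rw [eRk_ground, lam_contract_add_eRk, sdiff_union_self,
          show M.E \ (X \ {e}) ∪ {e} = M.E \ X ∪ {e} by tauto_set, union_singleton,
          union_singleton]
    _ ≤ M.eRk X + M.eRk (M.E \ X) + M.eRk {e} := key
    _ = lam M X + (M.eRk M.E + M.eRk {e}) := by rw [eRk_ground, ← add_assoc, lam_add_eRank]

lemma lam_inter_add_lam_insert_union_le [M.RankFinite] (he : e ∈ M.E) (heX : e ∉ X)
    (heY : e ∉ Y) :
    lam M (X ∩ Y) + lam M (insert e (X ∪ Y)) ≤ lam (M ＼ {e}) X + lam (M ／ {e}) Y + 1 := by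
  have hdel := lam_delete_add_eRk M {e} X
  rw [sdiff_singleton_eq_self heX, union_singleton] at hdel
  have hcon := lam_contract_add_eRk M {e} Y
  rw [union_singleton, union_singleton, insert_eq_of_mem (show e ∈ M.E \ Y from ⟨he, heY⟩)]
    at hcon
  have h1 := M.eRk_submod X (insert e Y)
  rw [inter_insert_of_notMem heX, union_insert] at h1
  have h2 := M.eRk_compl_union_add_eRk_compl_inter_le (insert e X) Y
  rw [insert_union, insert_inter_of_notMem heY] at h2
  refine (ENat.add_le_add_iff_right (k := M.eRank + M.eRank)
    (WithTop.add_ne_top.2 ⟨M.eRank_ne_top_iff.2 ‹_›, M.eRank_ne_top_iff.2 ‹_›⟩)).1 ?_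
  calc lam M (X ∩ Y) + lam M (insert e (X ∪ Y)) + (M.eRank + M.eRank)
      = (lam M (X ∩ Y) + M.eRank) + (lam M (insert e (X ∪ Y)) + M.eRank) := by ring
    _ = (M.eRk (X ∩ Y) + M.eRk (insert e (X ∪ Y))) +
          (M.eRk (M.E \ insert e (X ∪ Y)) + M.eRk (M.E \ (X ∩ Y))) := by
        rw [lam_add_eRank, lam_add_eRank]; ring
    _ ≤ (M.eRk X + M.eRk (insert e Y)) + (M.eRk (M.E \ insert e X) + M.eRk (M.E \ Y)) :=
        add_le_add h1 h2
    _ = (lam (M ＼ {e}) X + M.eRk (M.E \ {e})) +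
          (lam (M ／ {e}) Y + (M.eRank + M.eRk {e})) := by rw [hdel, hcon]; ring
    _ ≤ (lam (M ＼ {e}) X + M.eRank) + (lam (M ／ {e}) Y + (M.eRank + 1)) := by
        gcongr
        exacts [M.eRk_le_eRank _, M.eRk_singleton_le e]
    _ = lam (M ＼ {e}) X + lam (M ／ {e}) Y + 1 + (M.eRank + M.eRank) := by ring

lemma kap_le (hSX : S ⊆ X) (hXT : X ⊆ M.E \ T) : kap M S T ≤ lam M X :=
  iInf₂_le X ⟨hSX, hXT⟩

lemma le_kap {c : ℕ∞} (h : ∀ X, S ⊆ X → X ⊆ M.E \ T → c ≤ lam M X) : c ≤ kap M S T :=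
  le_iInf₂ fun X hX ↦ h X hX.1 hX.2

lemma exists_lam_lt_of_kap_lt {c : ℕ∞} (h : kap M S T < c) :
    ∃ X, S ⊆ X ∧ X ⊆ M.E \ T ∧ lam M X < c := by
  obtain ⟨X, hX⟩ := iInf_lt_iff.1 h
  obtain ⟨⟨hSX, hXT⟩, hlt⟩ := iInf_lt_iff.1 hX
  exact ⟨X, hSX, hXT, hlt⟩

lemma kap_eq_zero_of_eRank_eq_top (h : M.eRank = ⊤) (hS : S ⊆ M.E) (hST : Disjoint S T) :
    kap M S T = 0 :=
  nonpos_iff_eq_zero.1 <|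
    (kap_le subset_rfl (subset_sdiff.2 ⟨hS, hST⟩)).trans_eq (lam_eq_zero_of_eRank_eq_top h S)

lemma eRank_delete_singleton_eq_top (h : M.eRank = ⊤) : (M ＼ {e}).eRank = ⊤ := by
  have hle := M.eRk_insert_le_add_one e (M.E \ {e})
  rw [insert_sdiff_singleton, eRk_eq_eRank (subset_insert e M.E), h] at hle
  rw [← eRk_ground, eRk_delete, delete_ground, sdiff_idem]
  simpa using hle

lemma kap_delete_le [M.RankFinite] (hSD : Disjoint S D) : kap (M ＼ D) S T ≤ kap M S T :=
  le_kap fun X hSX hXT ↦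
    (kap_le (subset_sdiff.2 ⟨hSX, hSD⟩) (by rw [delete_ground]; tauto_set)).trans
      (lam_delete_le (hXT.trans sdiff_subset))

lemma kap_contract_le [M.RankFinite] (heS : e ∉ S) : kap (M ／ {e}) S T ≤ kap M S T :=
  le_kap fun X hSX hXT ↦
    (kap_le (subset_sdiff_singleton hSX heS) (by rw [contract_ground]; tauto_set)).trans
      lam_contract_le

lemma kap_delete_eq_or_kap_contract_eq [M.RankFinite] (he : e ∈ M.E \ (S ∪ T)) :
    kap (M ＼ {e}) S T = kap M S T ∨ kap (M ／ {e}) S T = kap M S T := by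
  obtain ⟨heE, heS, heT⟩ : e ∈ M.E ∧ e ∉ S ∧ e ∉ T := by simpa using he
  refine or_iff_not_and_not.2 fun ⟨hdel, hcon⟩ ↦ ?_
  obtain ⟨X, hSX, hXT, hX⟩ := exists_lam_lt_of_kap_lt
    ((kap_delete_le (disjoint_singleton_right.2 heS)).lt_of_ne hdel)
  obtain ⟨Y, hSY, hYT, hY⟩ := exists_lam_lt_of_kap_lt ((kap_contract_le heS).lt_of_ne hcon)
  simp only [delete_ground, contract_ground] at hXT hYT
  have h1 : kap M S T ≤ lam M (X ∩ Y) := kap_le (subset_inter hSX hSY) (by tauto_set)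
  have h2 : kap M S T ≤ lam M (insert e (X ∪ Y)) :=
    kap_le (hSX.trans (subset_union_left.trans (subset_insert _ _)))
      (insert_subset ⟨heE, heT⟩ (by tauto_set))
  have key := lam_inter_add_lam_insert_union_le heE (fun h ↦ (hXT h).1.2 rfl)
    (fun h ↦ (hYT h).1.2 rfl)
  exact (ENat.add_add_one_lt_add_self hX hY).not_ge ((add_le_add h1 h2).trans key)

end Intertwine

open Intertwine in
theorem del_or_con_preserves_kap_general {α : Type*} (M : Matroid α)
    (S T : Set α) (hS : S ⊆ M.E) (hST : Disjoint S T)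
    (e : α) (he : e ∈ M.E \ (S ∪ T)) :
    kap (del M {e}) S T = kap M S T ∨ kap (con M {e}) S T = kap M S T := by
  rw [del_eq_delete, con_eq_contract]
  obtain hfin | hinf := M.rankFinite_or_rankInfinite
  · exact kap_delete_eq_or_kap_contract_eq he
  · have hM := M.eRank_eq_top_iff.2 hinf
    have hSe : S ⊆ (M ＼ {e}).E := subset_sdiff_singleton hS fun h ↦ he.2 (.inl h)
    left
    rw [kap_eq_zero_of_eRank_eq_top hM hS hST,
      kap_eq_zero_of_eRank_eq_top (eRank_delete_singleton_eq_top hM) hSe hST]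

open Intertwine in
/-- For every `e ∈ E(M) \ (S ∪ T)`, either deleting or contracting `e` preserves
`κ(S,T)`. -/
theorem del_or_con_preserves_kap {α : Type*} (M : Matroid α)
    (S T : Set α) (hS : S ⊆ M.E) (hT : T ⊆ M.E) (hST : Disjoint S T)
    (e : α) (he : e ∈ M.E \ (S ∪ T)) :
    kap (del M {e}) S T = kap M S T ∨ kap (con M {e}) S T = kap M S T :=
  del_or_con_preserves_kap_general M S T hS hST e he
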